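/- arXiv:1605.08353 — 2 statements merged into one kernel-verified Lean document; each statement's English description precedes it below -/
import Mathlib

section
/- Let q(ℓ) = e^{−Aρ_S} ρ_S^ℓ (1−ρ_S) ∑_{k=0}^ℓ (ℓ choose k)[A(1−ρ_S)]^k/k! for ℓ ∈ ℕ, with 0 < ρ_S < 1 and A > 0. Then ∑_{ℓ≥0} q(ℓ) = 1. -/
/-!
Summing over `ℓ` first, `∑_ℓ C(ℓ,k) ρ^ℓ = ρ^k / (1-ρ)^(k+1)`, so the (absolutely convergent) double
series `∑_ℓ ρ^ℓ ∑_k C(ℓ,k) x^k/k!` collapses to `exp (x ρ / (1-ρ)) / (1-ρ)`. For `x = A (1-ρ)`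
this is `exp (A ρ) / (1-ρ)`, which the prefactor `exp (-(A ρ)) (1-ρ)` normalizes to `1`.
-/

open Finset

open scoped Nat

lemma hasSum_choose_mul_pow {𝕜 : Type*} [NormedField 𝕜] [HasSummableGeomSeries 𝕜]
    (k : ℕ) {r : 𝕜} (hr : ‖r‖ < 1) :
    HasSum (fun n ↦ (n.choose k : 𝕜) * r ^ n) (r ^ k / (1 - r) ^ (k + 1)) := by
  have hshift : HasSum (fun n ↦ ((n + k).choose k : 𝕜) * r ^ (n + k))
      (r ^ k / (1 - r) ^ (k + 1)) := by
    rw [← mul_one_div]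
    exact ((hasSum_choose_mul_geometric_of_norm_lt_one k hr).mul_left (r ^ k)).congr_fun
      fun n ↦ by ring
  have hlow : ∑ i ∈ range k, (i.choose k : 𝕜) * r ^ i = 0 :=
    sum_eq_zero fun i hi ↦ by simp [Nat.choose_eq_zero_of_lt (mem_range.mp hi)]
  exact (hasSum_nat_add_iff' k).mp (by rwa [hlow, sub_zero])

lemma Real.hasSum_pow_div_factorial (x : ℝ) : HasSum (fun n ↦ x ^ n / n !) (Real.exp x) := by
  rw [Real.exp_eq_exp_ℝ]
  exact NormedSpace.expSeries_div_hasSum_exp x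

section ChooseExpSeries

variable (x : ℝ) {r : ℝ}

lemma hasSum_choose_mul_pow_mul_pow_div_factorial (hr : |r| < 1) (k : ℕ) :
    HasSum (fun ℓ ↦ (ℓ.choose k : ℝ) * r ^ ℓ * (x ^ k / k !))
      ((x * r / (1 - r)) ^ k / k ! / (1 - r)) := by
  have hval :
      (x * r / (1 - r)) ^ k / k ! / (1 - r) = r ^ k / (1 - r) ^ (k + 1) * (x ^ k / k !) := by
    generalize 1 - r = s
    ring
  rw [hval]
  have hr' : ‖r‖ < 1 := by rwa [Real.norm_eq_abs]
  exact (hasSum_choose_mul_pow k hr').mul_right _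

lemma summable_choose_mul_pow_mul_pow_div_factorial (hr : |r| < 1) :
    Summable fun p : ℕ × ℕ ↦ (p.2.choose p.1 : ℝ) * r ^ p.2 * (x ^ p.1 / p.1 !) := by
  have hr' : |(|r|)| < 1 := by rwa [abs_abs]
  refine Summable.of_norm ?_
  have hnorm : (fun p : ℕ × ℕ ↦ ‖(p.2.choose p.1 : ℝ) * r ^ p.2 * (x ^ p.1 / p.1 !)‖) =
      fun p ↦ (p.2.choose p.1 : ℝ) * |r| ^ p.2 * (|x| ^ p.1 / p.1 !) := by
    funext p
    simp
  rw [hnorm, summable_prod_of_nonneg fun p ↦ by dsimp only; positivity]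
  refine ⟨fun k ↦ (hasSum_choose_mul_pow_mul_pow_div_factorial |x| hr' k).summable, ?_⟩
  simp_rw [(hasSum_choose_mul_pow_mul_pow_div_factorial |x| hr' _).tsum_eq]
  exact (Real.hasSum_pow_div_factorial _).summable.div_const _

lemma hasSum_pow_mul_sum_choose_mul_pow_div_factorial (hr : |r| < 1) :
    HasSum (fun ℓ ↦ r ^ ℓ * ∑ k ∈ range (ℓ + 1), (ℓ.choose k : ℝ) * x ^ k / k !)
      (Real.exp (x * r / (1 - r)) / (1 - r)) := by
  have hsum := (summable_choose_mul_pow_mul_pow_div_factorial x hr).hasSum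
  -- the fibres over `k` sum to the exponential series, those over `ℓ` are the finite sums
  have htsum := ((Real.hasSum_pow_div_factorial _).div_const (1 - r)).unique
    (hsum.prod_fiberwise (hasSum_choose_mul_pow_mul_pow_div_factorial x hr))
  rw [← htsum] at hsum
  refine ((Equiv.prodComm ℕ ℕ).hasSum_iff.mpr hsum).prod_fiberwise fun ℓ ↦ ?_
  rw [mul_sum]
  refine (hasSum_sum_of_ne_finset_zero fun k hk ↦ ?_).congr_fun fun k ↦ ?_
  · simp [Nat.choose_eq_zero_of_lt (by simpa using hk : ℓ < k)]
  · simp only [Function.comp_apply, Equiv.prodComm_apply, Prod.swap]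
    ring

end ChooseExpSeries

theorem q_is_probability_general
    (ρS A : ℝ) (hρS0 : 0 < ρS) (hρS1 : ρS < 1) :
    ∑' ℓ : ℕ, Real.exp (-(A * ρS)) * ρS ^ ℓ * (1 - ρS) *
      ∑ k ∈ Finset.range (ℓ + 1), ((ℓ.choose k : ℝ)) * (A * (1 - ρS)) ^ k / k.factorial = 1 := by
  have h1ρ : 1 - ρS ≠ 0 := by linarith
  have hρ : |ρS| < 1 := by rwa [abs_of_pos hρS0]
  have h := (hasSum_pow_mul_sum_choose_mul_pow_div_factorial (A * (1 - ρS)) hρ).mul_left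
    (Real.exp (-(A * ρS)) * (1 - ρS))
  have hval : Real.exp (-(A * ρS)) * (1 - ρS) *
      (Real.exp (A * (1 - ρS) * ρS / (1 - ρS)) / (1 - ρS)) = 1 := by
    rw [mul_right_comm A, mul_div_cancel_right₀ _ h1ρ, Real.exp_neg]
    field_simp
  rw [hval] at h
  exact (h.congr_fun fun ℓ ↦ by ring).tsum_eq

theorem q_is_probability
    (ρS A : ℝ) (hρS0 : 0 < ρS) (hρS1 : ρS < 1) (hA : 0 < A) :
    ∑' ℓ : ℕ, Real.exp (-(A * ρS)) * ρS ^ ℓ * (1 - ρS) *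
      ∑ k ∈ Finset.range (ℓ + 1), ((ℓ.choose k : ℝ)) * (A * (1 - ρS)) ^ k / k.factorial = 1 :=
  q_is_probability_general ρS A hρS0 hρS1
end

section
/- Under the QS first-step model, as θ_M → ∞ (equivalently ρ_θ → ∞) with ρ_S ∈ (0,1) and ρ_M > 0 fixed, the unique positive solution A(ρ_θ) of e^{−A}(1−ρ_S) = ρ_θ A + 1 − ρ_S − ρ_M tends to 0 and ρ_θ·A(ρ_θ) → ρ_M; consequently the static throughput γ_S = C(1−ρ_S)/(1+A) tends to C(1−ρ_S). -/
/-!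
Rewrite the fixed-point equation as `ρθ * A = ρM - (1 - ρS) * (1 - exp (-A))`. Since `A > 0` and
`ρS < 1`, the subtracted term is nonnegative, so `ρθ * A ≤ ρM` and `A → 0` as `ρθ → ∞`. Then
`exp (-A) → 1`, the subtracted term vanishes and `ρθ * A → ρM`; the throughput limit is continuity
of `A ↦ C (1 - ρS) / (1 + A)` at `0`.
-/

open Filter Topology

lemma tendsto_zero_of_nonneg_of_mul_le {A : ℝ → ℝ} {K : ℝ}
    (h : ∀ᶠ x in atTop, 0 ≤ A x ∧ x * A x ≤ K) : Tendsto A atTop (𝓝 0) := by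
  have hKx : Tendsto (fun x : ℝ => K / x) atTop (𝓝 0) :=
    tendsto_const_nhds.div_atTop tendsto_id
  refine tendsto_of_tendsto_of_tendsto_of_le_of_le' tendsto_const_nhds hKx ?_ ?_
  · filter_upwards [h] with x hx using hx.1
  · filter_upwards [h, eventually_gt_atTop 0] with x hx hx0
    rw [le_div_iff₀ hx0, mul_comm]
    exact hx.2

section FixedPoint

variable {ρS ρM ρθ a : ℝ}

lemma mul_eq_of_fixedPoint (h : Real.exp (-a) * (1 - ρS) = ρθ * a + 1 - ρS - ρM) :
    ρθ * a = ρM - (1 - ρS) * (1 - Real.exp (-a)) := by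
  linarith

lemma mul_le_of_fixedPoint (hρS : ρS < 1) (ha : 0 ≤ a)
    (h : Real.exp (-a) * (1 - ρS) = ρθ * a + 1 - ρS - ρM) : ρθ * a ≤ ρM := by
  have hexp : Real.exp (-a) ≤ 1 := Real.exp_le_one_iff.mpr (by linarith)
  rw [mul_eq_of_fixedPoint h]
  nlinarith

end FixedPoint

lemma tendsto_mul_of_fixedPoint {ρS ρM : ℝ} {A : ℝ → ℝ} (hA0 : Tendsto A atTop (𝓝 0))
    (hA : ∀ᶠ ρθ in atTop, Real.exp (-(A ρθ)) * (1 - ρS) = ρθ * A ρθ + 1 - ρS - ρM) :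
    Tendsto (fun ρθ => ρθ * A ρθ) atTop (𝓝 ρM) := by
  have hexp : Tendsto (fun ρθ => Real.exp (-(A ρθ))) atTop (𝓝 1) := by
    simpa using hA0.neg.rexp
  have hlim : Tendsto (fun ρθ => ρM - (1 - ρS) * (1 - Real.exp (-(A ρθ)))) atTop (𝓝 ρM) := by
    simpa using (tendsto_const_nhds (x := ρM)).sub
      ((tendsto_const_nhds (x := 1 - ρS)).mul ((tendsto_const_nhds (x := (1 : ℝ))).sub hexp))
  refine hlim.congr' ?_
  filter_upwards [hA] with ρθ h using (mul_eq_of_fixedPoint h).symm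

theorem QS_fast_mobility_limit_general
    (ρS ρM C : ℝ) (hρS1 : ρS < 1)
    (A : ℝ → ℝ)
    (hA : ∀ ρθ : ℝ, 0 < ρθ → 0 < A ρθ ∧
      Real.exp (-(A ρθ)) * (1 - ρS) = ρθ * A ρθ + 1 - ρS - ρM) :
    Tendsto A atTop (𝓝 0) ∧
    Tendsto (fun ρθ => ρθ * A ρθ) atTop (𝓝 ρM) ∧
    Tendsto (fun ρθ => C * (1 - ρS) / (1 + A ρθ)) atTop (𝓝 (C * (1 - ρS))) := by
  have hA' : ∀ᶠ ρθ in atTop, 0 < A ρθ ∧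
      Real.exp (-(A ρθ)) * (1 - ρS) = ρθ * A ρθ + 1 - ρS - ρM :=
    (eventually_gt_atTop 0).mono hA
  have hA0 : Tendsto A atTop (𝓝 0) := by
    refine tendsto_zero_of_nonneg_of_mul_le (K := ρM) ?_
    filter_upwards [hA'] with ρθ h using ⟨h.1.le, mul_le_of_fixedPoint hρS1 h.1.le h.2⟩
  refine ⟨hA0, tendsto_mul_of_fixedPoint hA0 (hA'.mono fun _ h => h.2), ?_⟩
  simpa [Pi.div_def] using (tendsto_const_nhds (x := C * (1 - ρS))).div
    ((tendsto_const_nhds (x := (1 : ℝ))).add hA0) (by norm_num)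

theorem QS_fast_mobility_limit
    (ρS ρM C : ℝ) (hρS0 : 0 < ρS) (hρS1 : ρS < 1) (hρM : 0 < ρM) (hC : 0 < C)
    (A : ℝ → ℝ)
    (hA : ∀ ρθ : ℝ, 0 < ρθ → 0 < A ρθ ∧
      Real.exp (-(A ρθ)) * (1 - ρS) = ρθ * A ρθ + 1 - ρS - ρM) :
    Tendsto A atTop (𝓝 0) ∧
    Tendsto (fun ρθ => ρθ * A ρθ) atTop (𝓝 ρM) ∧
    Tendsto (fun ρθ => C * (1 - ρS) / (1 + A ρθ)) atTop (𝓝 (C * (1 - ρS))) :=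
  QS_fast_mobility_limit_general ρS ρM C hρS1 A hA
end
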